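/- arXiv:0909.0743 — 2 statements merged into one kernel-verified Lean document; each statement's English description precedes it below -/
import Mathlib

section
/- Let p be a prime and f ∈ WKS^0_{p,2} with f(0) ≠ 0; let ξ ∈ ℤ_p be the unique zero of f and τ ∈ ℤ_p the unique fixed point of f. Then v_p(f(0)) = v_p(τ) = 1 + v_p(ξ); moreover τ/(p·ξ) ≡ −Δ¹f(0)/p (mod pℤ_p), equivalently ‖τ + Δ¹f(0)·ξ‖_p ≤ p^{−2}·‖ξ‖_p, and f(0)/τ ≡ 1 (mod pℤ_p), equivalently ‖f(0) − τ‖_p ≤ p^{−1}·‖τ‖_p. -/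
open Finset

/-- The forward difference operator `Δ_h^n` with increment `h ≥ 1`:
`Δ_h^n f(s) = ∑_{ν=0}^n (n choose ν)·(−1)^(n−ν)·f(s+νh)`. -/
noncomputable def deltaH (p : ℕ) [Fact p.Prime] (h : ℕ) (f : ℤ_[p] → ℤ_[p]) (n : ℕ)
    (s : ℤ_[p]) : ℤ_[p] :=
  ∑ ν ∈ Finset.range (n + 1),
    (n.choose ν : ℤ_[p]) * (-1) ^ (n - ν) * f (s + (ν : ℤ_[p]) * (h : ℤ_[p]))

/-- `f ∈ KS_{p,2}`: `f` is continuous and satisfies the Kummer type congruences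
`Δ^n f(s) ∈ p^n ℤ_p` for all integers `n ≥ 0` and all `s ∈ ℤ_p`. -/
def KS2 (p : ℕ) [Fact p.Prime] (f : ℤ_[p] → ℤ_[p]) : Prop :=
  Continuous f ∧ ∀ (n : ℕ) (s : ℤ_[p]), (p : ℤ_[p]) ^ n ∣ deltaH p 1 f n s

/-- `f ∈ WKS^0_{p,2}`: `f ∈ KS_{p,2}`, `f(0) ∈ pℤ_p`, `Δ¹f(0)/p` is a unit of `ℤ_p`, and
additionally `Δ²f(0)/4 ∈ 2ℤ_2` (i.e. `8 ∣ Δ²f(0)`) in case `p = 2`. -/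
def WKS0 (p : ℕ) [Fact p.Prime] (f : ℤ_[p] → ℤ_[p]) : Prop :=
  KS2 p f ∧ (p : ℤ_[p]) ∣ f 0 ∧
    (∃ u : ℤ_[p], IsUnit u ∧ deltaH p 1 f 1 0 = (p : ℤ_[p]) * u) ∧
    (p = 2 → (p : ℤ_[p]) ^ 3 ∣ deltaH p 1 f 2 0)

/-!
By Newton's formula `f n = ∑ₖ C(n,k) Δᵏf(0)`, and for `k ≥ 2` the Kummer congruence
`pᵏ ∣ Δᵏf(0)` together with `k·C(n,k) = n·C(n-1,k-1)` and `p²k ∣ pᵏ` (for `p = k = 2` this is the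
extra hypothesis `8 ∣ Δ²f(0)`) makes every term with `k ≥ 2` divisible by `p²n`. Hence
`f x ≡ f 0 + Δ¹f(0)·x (mod p²x)` on `ℕ`, and by continuity and density on all of `ℤ_p`.

Write `Δ¹f(0) = pu` with `u` a unit. At the zero this gives `f 0 = -pξ(u + pr)`, at the fixed
point `f 0 = τ(1 - p(u + ps))`, so `f 0`, `τ` and `pξ` are associates, which yields the valuations;
the two congruences are then read off the same identities.
-/

namespace PadicInt

variable {p : ℕ} [Fact p.Prime]

theorem norm_le_norm_iff_dvd {a b : ℤ_[p]} : ‖b‖ ≤ ‖a‖ ↔ a ∣ b := by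
  refine ⟨fun h => ?_, fun ⟨c, hc⟩ => ?_⟩
  · rcases eq_or_ne a 0 with rfl | ha
    · simp_all
    have ha' : (a : ℚ_[p]) ≠ 0 := coe_ne_zero.2 ha
    refine ⟨⟨(b : ℚ_[p]) / a, ?_⟩, ?_⟩
    · rw [norm_div, padic_norm_e_of_padicInt, padic_norm_e_of_padicInt]
      exact div_le_one_of_le₀ h (norm_nonneg _)
    · apply Subtype.ext
      exact (mul_div_cancel₀ _ ha').symm
  · rw [hc, norm_mul]
    exact mul_le_of_le_one_right (norm_nonneg _) (norm_le_one c)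

theorem isUnit_add_p_mul {u : ℤ_[p]} (hu : IsUnit u) (r : ℤ_[p]) : IsUnit (u + p * r) := by
  have hpr : ‖(p : ℤ_[p]) * r‖ < ‖u‖ := by
    rw [isUnit_iff.1 hu, norm_lt_one_iff_dvd]
    exact dvd_mul_right _ _
  rw [isUnit_iff, norm_add_eq_max_of_ne hpr.ne', max_eq_left hpr.le, isUnit_iff.1 hu]

theorem valuation_units (u : ℤ_[p]ˣ) : (u : ℤ_[p]).valuation = 0 := by
  have h := valuation_mul u.ne_zero u⁻¹.ne_zero
  rw [u.mul_inv, valuation_one] at h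
  omega

theorem valuation_eq_of_associated {a b : ℤ_[p]} (h : Associated a b) :
    a.valuation = b.valuation := by
  obtain ⟨u, rfl⟩ := h
  rcases eq_or_ne a 0 with rfl | ha
  · simp
  rw [valuation_mul ha u.ne_zero, valuation_units, add_zero]

end PadicInt

theorem Nat.add_two_le_pow_mul {p e m : ℕ} (hp : 2 ≤ p) (hm : 0 < m) (h : 2 ≤ p ^ e * m)
    (hpm : p ≠ 2 ∨ p ^ e * m ≠ 2) : e + 2 ≤ p ^ e * m := by
  have hpow : p ^ e ≤ p ^ e * m := Nat.le_mul_of_pos_right _ hm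
  rcases e with _ | _ | e
  · omega
  · rw [pow_one] at *
    omega
  · have h2 : 2 ^ e * 4 ≤ p ^ (e + 1 + 1) := by
      rw [show 2 ^ e * 4 = 2 ^ (e + 1 + 1) by ring]
      exact Nat.pow_le_pow_left hp _
    have he : e < 2 ^ e := Nat.lt_two_pow_self
    omega

section KummerCongruences

variable {p : ℕ} [hp : Fact p.Prime]

theorem sq_mul_natCast_dvd_pow_self {k : ℕ} (hk : 2 ≤ k) (hpk : p ≠ 2 ∨ k ≠ 2) :
    (p : ℤ_[p]) ^ 2 * k ∣ (p : ℤ_[p]) ^ k := by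
  obtain ⟨e, m, hpm, rfl⟩ :=
    Nat.exists_eq_pow_mul_and_not_dvd (by omega : k ≠ 0) p hp.out.ne_one
  have hm : 0 < m := Nat.pos_of_ne_zero (by rintro rfl; simp at hpm)
  have hunit : IsUnit (m : ℤ_[p]) := PadicInt.isUnit_iff.2 <|
    PadicInt.norm_natCast_eq_one_iff.2 <| (Nat.Prime.coprime_iff_not_dvd hp.out).2 hpm
  rw [Nat.cast_mul, Nat.cast_pow, ← mul_assoc, hunit.mul_right_dvd, ← pow_add, add_comm]
  exact pow_dvd_pow _ (Nat.add_two_le_pow_mul hp.out.two_le hm hk hpk)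

theorem deltaH_one_eq_fwdDiff_iter (f : ℤ_[p] → ℤ_[p]) (n : ℕ) (s : ℤ_[p]) :
    deltaH p 1 f n s = (fwdDiff 1)^[n] f s := by
  rw [fwdDiff_iter_eq_sum_shift, deltaH]
  refine Finset.sum_congr rfl fun k _ => ?_
  simp only [zsmul_eq_mul, nsmul_eq_mul, mul_one, Nat.cast_one]
  push_cast
  ring

theorem apply_natCast_eq_sum_choose_mul_deltaH (f : ℤ_[p] → ℤ_[p]) (n : ℕ) :
    f n = ∑ k ∈ range (n + 1), (n.choose k : ℤ_[p]) * deltaH p 1 f k 0 := by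
  have h := shift_eq_sum_fwdDiff_iter (1 : ℤ_[p]) f n 0
  simp only [nsmul_eq_mul, mul_one, zero_add] at h
  simp only [h, deltaH_one_eq_fwdDiff_iter]

theorem sq_mul_natCast_dvd_deltaH {f : ℤ_[p] → ℤ_[p]} (hf : KS2 p f)
    (h2 : p = 2 → (p : ℤ_[p]) ^ 3 ∣ deltaH p 1 f 2 0) {k : ℕ} (hk : 2 ≤ k) :
    (p : ℤ_[p]) ^ 2 * k ∣ deltaH p 1 f k 0 := by
  by_cases hpk : p = 2 ∧ k = 2
  · obtain ⟨rfl, rfl⟩ := hpk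
    simpa [pow_succ] using h2 rfl
  · exact (sq_mul_natCast_dvd_pow_self hk (not_and_or.1 hpk)).trans (hf.2 k 0)

theorem sq_mul_natCast_dvd_choose_mul_deltaH {f : ℤ_[p] → ℤ_[p]} (hf : KS2 p f)
    (h2 : p = 2 → (p : ℤ_[p]) ^ 3 ∣ deltaH p 1 f 2 0) (m i : ℕ) :
    (p : ℤ_[p]) ^ 2 * (m + 1 : ℕ) ∣
      ((m + 1).choose (i + 2) : ℤ_[p]) * deltaH p 1 f (i + 2) 0 := by
  obtain ⟨c, hc⟩ := sq_mul_natCast_dvd_deltaH hf h2 (k := i + 2) (by omega)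
  have hchoose := congrArg (Nat.cast : ℕ → ℤ_[p]) (Nat.add_one_mul_choose_eq m (i + 1))
  push_cast at hchoose hc ⊢
  exact ⟨m.choose (i + 1) * c, by
    rw [hc]; linear_combination (-(p : ℤ_[p]) ^ 2 * c) * hchoose⟩

theorem sq_mul_natCast_dvd_apply_natCast_sub {f : ℤ_[p] → ℤ_[p]} (hf : KS2 p f)
    (h2 : p = 2 → (p : ℤ_[p]) ^ 3 ∣ deltaH p 1 f 2 0) (n : ℕ) :
    (p : ℤ_[p]) ^ 2 * n ∣ f n - f 0 - deltaH p 1 f 1 0 * n := by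
  rcases n with _ | m
  · simp
  have hsum : f (m + 1 : ℕ) - f 0 - deltaH p 1 f 1 0 * (m + 1 : ℕ) =
      ∑ i ∈ range m, ((m + 1).choose (i + 2) : ℤ_[p]) * deltaH p 1 f (i + 2) 0 := by
    rw [apply_natCast_eq_sum_choose_mul_deltaH f, sum_range_succ', sum_range_succ']
    have hzero : deltaH p 1 f 0 0 = f 0 := by simp [deltaH]
    simp only [hzero, zero_add, Nat.choose_zero_right, Nat.choose_one_right]
    push_cast
    ring
  rw [hsum]
  exact dvd_sum fun i _ => sq_mul_natCast_dvd_choose_mul_deltaH hf h2 m i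

theorem norm_apply_sub_apply_zero_sub_le {f : ℤ_[p] → ℤ_[p]} (hf : KS2 p f)
    (h2 : p = 2 → (p : ℤ_[p]) ^ 3 ∣ deltaH p 1 f 2 0) (x : ℤ_[p]) :
    ‖f x - f 0 - deltaH p 1 f 1 0 * x‖ ≤ ‖(p : ℤ_[p]) ^ 2 * x‖ := by
  have hc := hf.1
  refine PadicInt.denseRange_natCast.induction_on x
    (isClosed_le (by fun_prop) (by fun_prop)) fun n => ?_
  exact PadicInt.norm_le_norm_iff_dvd.2 (sq_mul_natCast_dvd_apply_natCast_sub hf h2 n)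

theorem exists_apply_eq_add_sq_mul {f : ℤ_[p] → ℤ_[p]} (hf : KS2 p f)
    (h2 : p = 2 → (p : ℤ_[p]) ^ 3 ∣ deltaH p 1 f 2 0) (x : ℤ_[p]) :
    ∃ r, f x = f 0 + deltaH p 1 f 1 0 * x + (p : ℤ_[p]) ^ 2 * x * r := by
  obtain ⟨r, hr⟩ := PadicInt.norm_le_norm_iff_dvd.1 (norm_apply_sub_apply_zero_sub_le hf h2 x)
  exact ⟨r, by linear_combination hr⟩

end KummerCongruences

theorem stmt11 (p : ℕ) [Fact p.Prime] (f : ℤ_[p] → ℤ_[p]) (hf : WKS0 p f) (h0 : f 0 ≠ 0)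
    (ξ τ : ℤ_[p]) (hξ : f ξ = 0) (hτ : f τ = τ) :
    (f 0).valuation = τ.valuation ∧ τ.valuation = 1 + ξ.valuation ∧
      ‖τ + deltaH p 1 f 1 0 * ξ‖ ≤ (p : ℝ) ^ (-2 : ℤ) * ‖ξ‖ ∧
      ‖f 0 - τ‖ ≤ (p : ℝ)⁻¹ * ‖τ‖ := by
  obtain ⟨hks, -, ⟨u, hu, ha⟩, h2⟩ := hf
  have hξ0 : ξ ≠ 0 := by rintro rfl; exact h0 hξ
  obtain ⟨r, hr⟩ := exists_apply_eq_add_sq_mul hks h2 ξ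
  obtain ⟨s, hs⟩ := exists_apply_eq_add_sq_mul hks h2 τ
  rw [hξ, ha] at hr
  rw [hτ, ha] at hs
  have hξf0 : Associated ((p : ℤ_[p]) * ξ) (f 0) :=
    ⟨(PadicInt.isUnit_add_p_mul hu r).neg.unit, by
      rw [IsUnit.unit_spec]; linear_combination hr⟩
  have hτf0 : Associated τ (f 0) :=
    ⟨(PadicInt.isUnit_add_p_mul isUnit_one (-(u + (p : ℤ_[p]) * s))).unit, by
      rw [IsUnit.unit_spec]; linear_combination hs⟩
  obtain ⟨w, hw⟩ := (hξf0.trans hτf0.symm).dvd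
  refine ⟨(PadicInt.valuation_eq_of_associated hτf0).symm, ?_, ?_, ?_⟩
  · rw [PadicInt.valuation_eq_of_associated (hτf0.trans hξf0.symm),
      ← PadicInt.valuation_p_pow_mul 1 ξ hξ0, pow_one]
  · have hdvd : (p : ℤ_[p]) ^ 2 * ξ ∣ τ + deltaH p 1 f 1 0 * ξ :=
      ⟨w * (u + p * s) - r, by
        rw [ha]; linear_combination hs - hr + (p : ℤ_[p]) * (u + p * s) * hw⟩
    refine (PadicInt.norm_le_norm_iff_dvd.2 hdvd).trans_eq ?_
    rw [norm_mul, PadicInt.norm_p_pow]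
    norm_num
  · have hdvd : (p : ℤ_[p]) * τ ∣ f 0 - τ := ⟨-(u + p * s), by linear_combination -hs⟩
    refine (PadicInt.norm_le_norm_iff_dvd.2 hdvd).trans_eq ?_
    rw [norm_mul, PadicInt.norm_p]
end

section
/- Let p be a prime and f : ℕ → ℤ_p a Kummer function, i.e. v_p( Σ_{ν=0}^n (n choose ν)·(−1)^{n−ν}·f(ν) ) ≥ n for every integer n ≥ 0. Then there exists a unique continuous function g : ℤ_p → ℤ_p with g(n) = f(n) for all n ∈ ℕ, and this extension g belongs to KS_{p,2}, i.e. Δ^n g(s) ∈ p^n ℤ_p for all n ≥ 0 and all s ∈ ℤ_p. -/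
/-!
The hypothesis says that the Mahler coefficients `Δⁿ f(0)` of `f` are divisible by `pⁿ`.
They therefore tend to `0`, so the Mahler series `∑ Δⁿ f(0) · (x choose n)` is a continuous
extension of `f`, unique since `ℕ` is dense in `ℤ_p`. For any such extension `g`, the
congruence `pⁿ ∣ Δⁿ g(s)` spreads from `s = 0` to every `s ∈ ℕ` through
`Δⁿ g(s + 1) = Δⁿ⁺¹ g(s) + Δⁿ g(s)`, and then to all of `ℤ_p` because it cuts out a closed set.
-/

open Finset

open fwdDiff Filter Topology

section FwdDiff

variable {M R : Type*} [AddCommMonoid M]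

lemma fwdDiff_iter_apply_add_self [AddCommGroup R] (h : M) (f : M → R) (n : ℕ) (y : M) :
    Δ_[h] ^[n] f (y + h) = Δ_[h] ^[n + 1] f y + Δ_[h] ^[n] f y := by
  rw [Function.iterate_succ_apply', fwdDiff, sub_add_cancel]

lemma pow_dvd_fwdDiff_iter_add_nsmul [Ring R] {a : R} {h x : M} {f : M → R}
    (hf : ∀ n, a ^ n ∣ Δ_[h] ^[n] f x) (m n : ℕ) :
    a ^ n ∣ Δ_[h] ^[n] f (x + m • h) := by
  induction m generalizing n with
  | zero => simpa using hf n
  | succ m ih =>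
    rw [succ_nsmul, ← add_assoc, fwdDiff_iter_apply_add_self]
    exact dvd_add ((pow_dvd_pow a n.le_succ).trans (ih (n + 1))) (ih n)

lemma fwdDiff_iter_eq_sum_choose_mul [CommRing R] (h : M) (f : M → R) (n : ℕ) (y : M) :
    Δ_[h] ^[n] f y =
      ∑ ν ∈ range (n + 1), (n.choose ν : R) * (-1) ^ (n - ν) * f (y + ν • h) := by
  rw [fwdDiff_iter_eq_sum_shift]
  refine sum_congr rfl fun ν _ => ?_
  rw [zsmul_eq_mul]
  push_cast
  ring

lemma Continuous.fwdDiff_iter [TopologicalSpace M] [ContinuousAdd M] [TopologicalSpace R]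
    [AddCommGroup R] [IsTopologicalAddGroup R] {f : M → R} (hf : Continuous f) (h : M) (n : ℕ) :
    Continuous (Δ_[h] ^[n] f) := by
  induction n with
  | zero => exact hf
  | succ n ih =>
    rw [Function.iterate_succ_apply']
    exact (ih.comp (continuous_add_const h)).sub ih

end FwdDiff

namespace PadicInt

variable {p : ℕ} [Fact p.Prime]

lemma pow_dvd_iff_norm_le {x : ℤ_[p]} {n : ℕ} :
    (p : ℤ_[p]) ^ n ∣ x ↔ ‖x‖ ≤ (p : ℝ) ^ (-n : ℤ) := by
  rw [norm_le_pow_iff_mem_span_pow, Ideal.mem_span_singleton]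

lemma isClosed_setOf_pow_dvd (n : ℕ) : IsClosed {x : ℤ_[p] | (p : ℤ_[p]) ^ n ∣ x} := by
  simp only [pow_dvd_iff_norm_le]
  exact isClosed_le continuous_norm continuous_const

lemma tendsto_zero_of_forall_pow_dvd {a : ℕ → ℤ_[p]} (ha : ∀ n, (p : ℤ_[p]) ^ n ∣ a n) :
    Tendsto a atTop (𝓝 0) := by
  have hp : (1 : ℝ) < p := mod_cast (Fact.out : p.Prime).one_lt
  rw [tendsto_zero_iff_norm_tendsto_zero]
  refine squeeze_zero (fun n => norm_nonneg _) (fun n => ?_)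
    (tendsto_pow_atTop_nhds_zero_of_lt_one (by positivity) (inv_lt_one_of_one_lt₀ hp))
  simpa [zpow_neg, inv_pow] using pow_dvd_iff_norm_le.mp (ha n)

theorem exists_continuous_extension_of_tendsto_fwdDiff {f : ℕ → ℤ_[p]}
    (hf : Tendsto (fun n => Δ_[1] ^[n] f 0) atTop (𝓝 0)) :
    ∃ g : C(ℤ_[p], ℤ_[p]), ∀ n : ℕ, g n = f n := by
  refine ⟨mahlerSeries fun n => Δ_[1] ^[n] f 0, fun m => ?_⟩
  rw [mahlerSeries_apply_nat hf le_rfl]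
  simpa using (shift_eq_sum_fwdDiff_iter 1 f m 0).symm

end PadicInt

lemma deltaH_eq_fwdDiff_iter (p : ℕ) [Fact p.Prime] (h : ℕ) (f : ℤ_[p] → ℤ_[p]) (n : ℕ)
    (s : ℤ_[p]) : deltaH p h f n s = Δ_[(h : ℤ_[p])] ^[n] f s := by
  simp [deltaH, fwdDiff_iter_eq_sum_choose_mul]

theorem KS2.of_continuous_of_pow_dvd_fwdDiff_iter_zero {p : ℕ} [Fact p.Prime]
    {g : ℤ_[p] → ℤ_[p]} (hg : Continuous g) (h0 : ∀ n, (p : ℤ_[p]) ^ n ∣ Δ_[1] ^[n] g 0) :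
    KS2 p g := by
  refine ⟨hg, fun n s => ?_⟩
  rw [deltaH_eq_fwdDiff_iter, Nat.cast_one]
  refine PadicInt.denseRange_natCast.induction_on s
    ((PadicInt.isClosed_setOf_pow_dvd n).preimage (hg.fwdDiff_iter 1 n)) fun m => ?_
  simpa using pow_dvd_fwdDiff_iter_add_nsmul h0 m n

theorem stmt18 (p : ℕ) [Fact p.Prime] (f : ℕ → ℤ_[p])
    (hf : ∀ n : ℕ, (p : ℤ_[p]) ^ n ∣
      ∑ ν ∈ Finset.range (n + 1), (n.choose ν : ℤ_[p]) * (-1) ^ (n - ν) * f ν) :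
    (∃! g : ℤ_[p] → ℤ_[p], Continuous g ∧ ∀ n : ℕ, g (n : ℤ_[p]) = f n) ∧
      ∀ g : ℤ_[p] → ℤ_[p], (Continuous g ∧ ∀ n : ℕ, g (n : ℤ_[p]) = f n) → KS2 p g := by
  have hΔf (n : ℕ) : (p : ℤ_[p]) ^ n ∣ Δ_[1] ^[n] f 0 := by
    simpa [fwdDiff_iter_eq_sum_choose_mul] using hf n
  obtain ⟨g, hgf⟩ := PadicInt.exists_continuous_extension_of_tendsto_fwdDiff
    (PadicInt.tendsto_zero_of_forall_pow_dvd hΔf)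
  refine ⟨⟨g, ⟨g.continuous, hgf⟩, fun g' ⟨hg', hg'f⟩ => ?_⟩,
    fun g' ⟨hg', hg'f⟩ => ?_⟩
  · exact PadicInt.denseRange_natCast.equalizer hg' g.continuous
      (funext fun m => (hg'f m).trans (hgf m).symm)
  · refine KS2.of_continuous_of_pow_dvd_fwdDiff_iter_zero hg' fun n => ?_
    simpa [fwdDiff_iter_eq_sum_choose_mul, hg'f] using hf n
end
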